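/- A policy π of the finite-horizon vector-valued MDP is efficient if and only if there exist strictly positive weights p_1,...,p_k such that x_π maximizes the scalar linear objective (p^T C)x over the state-action frequency polytope P. -/

import Mathlib

open Finset

/-- A finite-horizon MDP with `N` states, horizon `T` (epochs `0,…,T-1`, so `T ≥ 2` has at
least one decision epoch), action sets `Fin (k s)` for each state `s`, and transition
probabilities `p t s a j = p_t(j | s, a)` governing the move from epoch `t` to `t+1`,
together with a strictly positive initial distribution `α`. -/
structure MDP (N T : ℕ) (k : Fin N → ℕ) : Type where
  p : ℕ → (s : Fin N) → Fin (k s) → Fin N → ℝ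
  α : Fin N → ℝ
  p_nonneg : ∀ t s a j, 0 ≤ p t s a j
  p_sum : ∀ t s a, ∑ j, p t s a j = 1
  α_pos : ∀ s, 0 < α s
  α_sum : ∑ s, α s = 1

/-- A (randomized, Markov, non-stationary) policy: `q t s a` is the probability that
action `a` is chosen in state `s` at decision epoch `t`. -/
structure Policy (N : ℕ) (k : Fin N → ℕ) : Type where
  q : ℕ → (s : Fin N) → Fin (k s) → ℝ
  q_nonneg : ∀ t s a, 0 ≤ q t s a
  q_sum : ∀ t s, ∑ a, q t s a = 1

variable {N T : ℕ} {k : Fin N → ℕ}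

/-- `condProb M π j t s` is `P^π(S_t = s | S_0 = j)` (epochs indexed from 0). -/
def condProb (M : MDP N T k) (π : Policy N k) (j : Fin N) : ℕ → Fin N → ℝ
  | 0, s => if s = j then 1 else 0
  | t+1, s => ∑ s', ∑ a, condProb M π j t s' * π.q t s' a * M.p t s' a s

/-- The state-action frequency `x_{π,t}(s,a) = ∑_j α(j) P^π(S_t = s, A_t = a | S_0 = j)`
(epochs indexed from 0, so the decision epochs are `0,…,T-2`). -/
def xsa (M : MDP N T k) (π : Policy N k) (t : ℕ) (s : Fin N) (a : Fin (k s)) : ℝ :=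
  ∑ j, M.α j * condProb M π j t s * π.q t s a

/-- The terminal state frequency `x_{π,T}(s)` (terminal epoch is `T-1` in 0-based indexing). -/
def xT (M : MDP N T k) (π : Policy N k) (s : Fin N) : ℝ :=
  ∑ j, M.α j * condProb M π j (T-1) s

variable (TT : ℕ)

/-- The finite-dimensional space housing state-action frequency vectors for a horizon
`TT + 2` process: a component `x.1 t s a` for every decision epoch `t ∈ {0,…,TT}`, state
`s` and action `a`, and a terminal component `x.2 s` for every state `s`. -/
abbrev FreqSpace (N : ℕ) (k : Fin N → ℕ) (TT : ℕ) : Type :=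
  (Fin (TT+1) → (s : Fin N) → Fin (k s) → ℝ) × (Fin N → ℝ)

/-- Membership in the state-action frequency polytope `P`: nonnegativity together with the
initial condition (a), flow conservation (b), and the terminal condition (c). -/
def inP {N : ℕ} {k : Fin N → ℕ} {TT : ℕ} (M : MDP N (TT+2) k)
    (x : FreqSpace N k TT) : Prop :=
  (∀ t s a, 0 ≤ x.1 t s a) ∧ (∀ s, 0 ≤ x.2 s) ∧
  (∀ j, ∑ a, x.1 0 j a = M.α j) ∧
  (∀ (t : Fin TT) (j : Fin N),
    ∑ a, x.1 t.succ j a = ∑ s, ∑ a, M.p (t : ℕ) s a j * x.1 t.castSucc s a) ∧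
  (∀ j, x.2 j = ∑ s, ∑ a, M.p TT s a j * x.1 (Fin.last TT) s a)

/-- The state-action frequency polytope `P`. -/
def Pset {N : ℕ} {k : Fin N → ℕ} {TT : ℕ} (M : MDP N (TT+2) k) :
    Set (FreqSpace N k TT) :=
  {x | inP M x}

/-- The state-action frequency vector `x_π` of a policy, as a point of `FreqSpace`. -/
def xvec {N : ℕ} {k : Fin N → ℕ} {TT : ℕ} (M : MDP N (TT+2) k) (π : Policy N k) :
    FreqSpace N k TT :=
  (fun t s a => xsa M π (t : ℕ) s a, fun s => xT M π s)

/-- The process is regular when every policy can reach every state at every epoch. -/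
def RegularProcess {N : ℕ} {k : Fin N → ℕ} {TT : ℕ} (M : MDP N (TT+2) k) : Prop :=
  ∀ (π : Policy N k) (t : ℕ) (s : Fin N), t ≤ TT + 1 → ∃ j, 0 < condProb M π j t s

/-- A policy is deterministic (up to the horizon) if at every decision epoch and state it
puts probability one on a single action. -/
def Deterministic {N : ℕ} (k : Fin N → ℕ) (TT : ℕ) (π : Policy N k) : Prop :=
  ∀ t s, t ≤ TT → ∃ a, π.q t s a = 1

/-- A policy is regular if at every decision epoch and every state unreachable there, it
puts full mass on the first action. -/
def RegularPol {N : ℕ} {k : Fin N → ℕ} {TT : ℕ} (M : MDP N (TT+2) k)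
    (hk : ∀ s, 1 ≤ k s) (π : Policy N k) : Prop :=
  ∀ t s, t ≤ TT → (∀ j, condProb M π j t s = 0) → π.q t s ⟨0, hk s⟩ = 1

/-- The linear reward objective of the equivalent vector linear program: `Cx`, the total
vector-valued reward accrued by a state-action frequency vector `x`. -/
def Lval {N TT kk : ℕ} {k : Fin N → ℕ}
    (R : ℕ → (s : Fin N) → Fin (k s) → Fin kk → ℝ) (RT : Fin N → Fin kk → ℝ)
    (x : FreqSpace N k TT) : Fin kk → ℝ :=
  (∑ t : Fin (TT+1), ∑ s, ∑ a, x.1 t s a • R (t : ℕ) s a) + ∑ s, x.2 s • RT s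

/-!
The frequency vector `x_π` depends affinely on the decision rule of any single epoch, and a
randomized rule is a convex combination of deterministic ones (with product weights). Splitting
the epochs one at a time, and realizing every point of `P` by a policy, shows that `P` is the
convex hull of the finitely many frequency vectors of deterministic policies. Efficiency of `π`
therefore says that `C x_π` is not dominated by any point of the polytope `C P`, i.e. the cone
spanned by the vectors `C x_g - C x_π` meets the nonnegative orthant only in `0`. That cone is
finitely generated, hence closed (conic Carathéodory), so it can be separated from the standard
simplex; the separating functional gives the strictly positive weights.
-/

theorem exists_sub_smul_nonneg_eq_zero {ι : Type*} {S : Finset ι} {μ c : ι → ℝ}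
    (hμ : ∀ i ∈ S, 0 ≤ μ i) (hc : ∃ i ∈ S, 0 < c i) :
    ∃ τ : ℝ, (∀ i ∈ S, 0 ≤ μ i - τ * c i) ∧ ∃ i₁ ∈ S, μ i₁ - τ * c i₁ = 0 := by
  classical
  obtain ⟨i₁, hi₁, hmin⟩ := (S.filter (0 < c ·)).exists_min_image (fun i => μ i / c i)
    (let ⟨i, hi, hci⟩ := hc; ⟨i, mem_filter.2 ⟨hi, hci⟩⟩)
  obtain ⟨hi₁S, hci₁⟩ := mem_filter.1 hi₁
  refine ⟨μ i₁ / c i₁, fun i hi => ?_, i₁, hi₁S, by field_simp; ring⟩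
  rcases lt_or_ge 0 (c i) with hci | hci
  · linarith [(le_div_iff₀ hci).1 (hmin i (mem_filter.2 ⟨hi, hci⟩))]
  · nlinarith [hμ i hi, div_nonneg (hμ i₁ hi₁S) hci₁.le]

namespace PointedCone

variable {ι E : Type*} [AddCommGroup E] [Module ℝ E]

theorem mem_hull_image_finset_iff {g : ι → E} {S : Finset ι} {x : E} :
    x ∈ hull ℝ (g '' S) ↔ ∃ μ : ι → ℝ, (∀ i ∈ S, 0 ≤ μ i) ∧ ∑ i ∈ S, μ i • g i = x := by
  classical
  constructor
  · intro hx
    induction hx using Submodule.span_induction with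
    | mem y hy =>
      obtain ⟨i, hi, rfl⟩ := hy
      have hsingle : (0 : ι → ℝ) ≤ Pi.single i 1 := Pi.single_nonneg.2 zero_le_one
      refine ⟨Pi.single i 1, fun j _ => hsingle j, ?_⟩
      rw [sum_eq_single_of_mem i hi fun j _ hj => by simp [hj]]
      simp
    | zero => exact ⟨0, by simp, by simp⟩
    | add y z _ _ hy hz =>
      obtain ⟨μ, hμ, rfl⟩ := hy
      obtain ⟨ν, hν, rfl⟩ := hz
      exact ⟨μ + ν, fun i hi => add_nonneg (hμ i hi) (hν i hi), by
        simp only [Pi.add_apply, add_smul, sum_add_distrib]⟩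
    | smul c y _ hy =>
      obtain ⟨μ, hμ, rfl⟩ := hy
      exact ⟨(c : ℝ) • μ, fun i hi => mul_nonneg c.2 (hμ i hi), by
        simp only [Pi.smul_apply, smul_eq_mul, mul_smul, smul_sum]; rfl⟩
  · rintro ⟨μ, hμ, rfl⟩
    exact sum_mem fun i hi => (hull ℝ _).smul_mem (hμ i hi) (subset_hull ⟨i, hi, rfl⟩)

/-- Carathéodory's theorem for cones. -/
theorem exists_linearIndepOn_of_mem_hull_image {g : ι → E} {S : Finset ι} {x : E}
    (hx : x ∈ hull ℝ (g '' S)) : ∃ T ⊆ S, LinearIndepOn ℝ g T ∧ x ∈ hull ℝ (g '' T) := by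
  classical
  induction S using Finset.strongInduction with
  | H S ih =>
  by_cases hS : LinearIndepOn ℝ g S
  · exact ⟨S, subset_rfl, hS, hx⟩
  obtain ⟨c, hc, hcpos⟩ : ∃ c : ι → ℝ, ∑ i ∈ S, c i • g i = 0 ∧ ∃ i ∈ S, 0 < c i := by
    obtain ⟨c, hc, i, hi, hci⟩ := not_linearIndepOn_finset_iff.1 hS
    rcases hci.lt_or_gt with hci | hci
    · exact ⟨-c, by simp [hc], i, hi, neg_pos.2 hci⟩
    · exact ⟨c, hc, i, hi, hci⟩
  obtain ⟨μ, hμ, rfl⟩ := mem_hull_image_finset_iff.1 hx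
  obtain ⟨τ, hτ, i₁, hi₁, hzero⟩ := exists_sub_smul_nonneg_eq_zero hμ hcpos
  have hx' : ∑ i ∈ S, μ i • g i ∈ hull ℝ (g '' ↑(S.erase i₁)) := by
    refine mem_hull_image_finset_iff.2
      ⟨fun i => μ i - τ * c i, fun i hi => hτ i (mem_of_mem_erase hi), ?_⟩
    rw [sum_erase _ (by simp only [hzero, zero_smul])]
    simp only [sub_smul, sum_sub_distrib, mul_smul, ← smul_sum, hc, smul_zero, sub_zero]
  obtain ⟨T, hTS, hT, hxT⟩ := ih _ (erase_ssubset hi₁) hx'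
  exact ⟨T, hTS.trans (erase_subset _ _), hT, hxT⟩

variable [TopologicalSpace E] [IsTopologicalAddGroup E] [ContinuousSMul ℝ E] [T2Space E]

theorem isClosed_hull_image_of_linearIndepOn {g : ι → E} {S : Finset ι}
    (hS : LinearIndepOn ℝ g S) : IsClosed (hull ℝ (g '' S) : Set E) := by
  let A := Fintype.linearCombination ℝ fun i : S => g i
  have hA : (hull ℝ (g '' S) : Set E) = A '' Set.Ici 0 := by
    ext x
    rw [Set.image_eq_range]
    simp only [SetLike.mem_coe, Submodule.mem_span_range_iff_exists_fun, Set.mem_image,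
      Set.mem_Ici, A, Fintype.linearCombination_apply]
    constructor
    · rintro ⟨c, rfl⟩
      exact ⟨fun i => c i, fun i => (c i).2, rfl⟩
    · rintro ⟨μ, hμ, rfl⟩
      exact ⟨fun i => ⟨μ i, hμ i⟩, rfl⟩
  rw [hA]
  refine (LinearMap.isClosedEmbedding_of_injective ?_).isClosedMap _ isClosed_Ici
  exact LinearMap.ker_eq_bot_of_injective hS.fintypeLinearCombination_injective

theorem isClosed_hull_image_finset (g : ι → E) (S : Finset ι) :
    IsClosed (hull ℝ (g '' S) : Set E) := by
  classical
  have : (hull ℝ (g '' S) : Set E) =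
      ⋃ T ∈ S.powerset.filter fun T : Finset ι => LinearIndepOn ℝ g T,
        (hull ℝ (g '' T) : Set E) := by
    ext x
    simp only [Set.mem_iUnion, mem_filter, mem_powerset, exists_prop, SetLike.mem_coe]
    constructor
    · intro hx
      obtain ⟨T, hTS, hT, hxT⟩ := exists_linearIndepOn_of_mem_hull_image hx
      exact ⟨T, ⟨hTS, hT⟩, hxT⟩
    · rintro ⟨T, ⟨hTS, -⟩, hxT⟩
      exact Submodule.span_mono (Set.image_mono (coe_subset.2 hTS)) hxT
  rw [this]
  exact isClosed_biUnion_finset fun T hT =>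
    isClosed_hull_image_of_linearIndepOn (mem_filter.1 hT).2

end PointedCone

open PointedCone

section Scalarization

variable {σ : Type*}

theorem eq_of_le_of_dotProduct_le [Fintype σ] {w y z : σ → ℝ} (hw : ∀ i, 0 < w i)
    (hyz : y ≤ z) (h : w ⬝ᵥ z ≤ w ⬝ᵥ y) : z = y := by
  by_contra hne
  obtain ⟨i, hi⟩ := Function.ne_iff.1 hne
  have : w ⬝ᵥ y < w ⬝ᵥ z :=
    sum_lt_sum (fun j _ => mul_le_mul_of_nonneg_left (hyz j) (hw j).le)
      ⟨i, mem_univ i, mul_lt_mul_of_pos_left ((hyz i).lt_of_ne' hi) (hw i)⟩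
  exact h.not_gt this

theorem eq_zero_of_mem_hull_sub_of_nonneg {s : Finset (σ → ℝ)} {y₀ v : σ → ℝ}
    (h : ∀ z ∈ convexHull ℝ (s : Set (σ → ℝ)), y₀ ≤ z → z = y₀)
    (hv : v ∈ hull ℝ ((· - y₀) '' s)) (hv0 : 0 ≤ v) : v = 0 := by
  obtain ⟨μ, hμ, rfl⟩ := mem_hull_image_finset_iff.1 hv
  rcases (sum_nonneg hμ).eq_or_lt with hΛ | hΛ
  · have hμ0 := (sum_eq_zero_iff_of_nonneg hμ).1 hΛ.symm
    exact sum_eq_zero fun y hy => by rw [hμ0 y hy, zero_smul]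
  have hz : s.centerMass μ id ∈ convexHull ℝ ↑s :=
    s.centerMass_mem_convexHull hμ hΛ fun y hy => hy
  have hrepr : ∑ y ∈ s, μ y • (y - y₀) = (∑ y ∈ s, μ y) • (s.centerMass μ id - y₀) := by
    simp only [centerMass, id, smul_sub, smul_inv_smul₀ hΛ.ne', sum_sub_distrib, sum_smul]
  rw [hrepr] at hv0 ⊢
  have hle : y₀ ≤ s.centerMass μ id :=
    sub_nonneg.1 ((smul_nonneg_iff_nonneg_of_pos_left hΛ).1 hv0)
  rw [h _ hz hle, sub_self, smul_zero]

theorem exists_pos_weights_of_not_dominated [Fintype σ] (s : Finset (σ → ℝ)) (y₀ : σ → ℝ)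
    (h : ∀ z ∈ convexHull ℝ (s : Set (σ → ℝ)), y₀ ≤ z → z = y₀) :
    ∃ w : σ → ℝ, (∀ i, 0 < w i) ∧ ∀ z ∈ convexHull ℝ (s : Set (σ → ℝ)), w ⬝ᵥ z ≤ w ⬝ᵥ y₀ := by
  classical
  let C : ProperCone ℝ (σ → ℝ) := ⟨hull ℝ ((· - y₀) '' s), isClosed_hull_image_finset _ _⟩
  have hdisj : Disjoint (stdSimplex ℝ σ) (C : Set (σ → ℝ)) := by
    refine Set.disjoint_left.2 fun v hv hvC => ?_
    have := eq_zero_of_mem_hull_sub_of_nonneg h hvC hv.1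
    simpa [this] using hv.2
  obtain ⟨f, hfC, hfΔ⟩ :=
    C.hyperplane_separation (convex_stdSimplex ℝ σ) (isCompact_stdSimplex ℝ σ) hdisj
  let w : σ → ℝ := fun i => -f (Pi.single i 1)
  have hf : ∀ v, f v = -(w ⬝ᵥ v) := fun v => by
    have hsingle : ∀ i : σ, (fun j => if i = j then (1 : ℝ) else 0) = Pi.single i 1 :=
      fun i => by ext j; simp [Pi.single_apply, @eq_comm _ i j]
    rw [← ContinuousLinearMap.coe_coe, LinearMap.pi_apply_eq_sum_univ]
    simp [w, dotProduct, hsingle, mul_comm]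
  refine ⟨w, fun i => neg_pos.2 (hfΔ _ (single_mem_stdSimplex ℝ i)), fun z hz => ?_⟩
  have hs : (s : Set (σ → ℝ)) ⊆ {z | f y₀ ≤ f z} := fun y hy => by
    simpa [sub_nonneg] using hfC (y - y₀) (subset_hull ⟨y, hy, rfl⟩)
  have : f y₀ ≤ f z := convexHull_min hs (convex_halfSpace_ge f.toLinearMap.isLinear _) hz
  linarith [hf y₀, hf z]

end Scalarization

section ProductWeights

variable {σ : Type*} [Fintype σ] [DecidableEq σ] {β : σ → Type*} [∀ s, Fintype (β s)]
  {R : Type*} [CommSemiring R] {r : ∀ s, β s → R}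

theorem sum_pi_prod_eq_one (hr : ∀ s, ∑ b, r s b = 1) : ∑ f : ∀ s, β s, ∏ s, r s (f s) = 1 := by
  rw [← Fintype.prod_sum]
  simp [hr]

theorem sum_pi_prod_mul_ite_eq [∀ s, DecidableEq (β s)] (hr : ∀ s, ∑ b, r s b = 1) (s : σ)
    (a : β s) : ∑ f : ∀ s, β s, (∏ s', r s' (f s')) * (if a = f s then 1 else 0) = r s a := by
  let r' := Function.update r s fun b => if a = b then r s b else 0
  have hprod : ∀ f : ∀ s, β s, (∏ s', r s' (f s')) * (if a = f s then 1 else 0) =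
      ∏ s', r' s' (f s') := fun f => by
    by_cases ha : a = f s
    · subst ha
      rw [if_pos rfl, mul_one]
      refine prod_congr rfl fun s' _ => ?_
      by_cases hs : s' = s
      · subst hs; simp [r']
      · simp [r', Function.update_of_ne hs]
    · rw [if_neg ha, mul_zero, eq_comm]
      exact prod_eq_zero (mem_univ s) (by simp [r', ha])
  have hsum : ∀ s', ∑ b, r' s' b = if s' = s then r s a else 1 := fun s' => by
    by_cases hs : s' = s
    · subst hs; simp [r']
    · simp [r', hs, hr]
  simp only [hprod, ← Fintype.prod_sum, hsum, prod_ite_eq', mem_univ, if_true]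

end ProductWeights

theorem eq_ite_of_apply_eq_one {α : Type*} [Fintype α] [DecidableEq α] {v : α → ℝ}
    (hv : ∀ a, 0 ≤ v a) (hsum : ∑ a, v a = 1) {a₀ : α} (ha₀ : v a₀ = 1) (a : α) :
    v a = if a = a₀ then 1 else 0 := by
  split_ifs with h
  · rw [h, ha₀]
  · have := add_sum_erase univ v (mem_univ a₀)
    have := single_le_sum (fun b _ => hv b) (mem_erase.2 ⟨h, mem_univ a⟩)
    linarith [hv a]

section StateFrequency

def stateFreq (M : MDP N T k) (π : Policy N k) (t : ℕ) (s : Fin N) : ℝ :=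
  ∑ j, M.α j * condProb M π j t s

variable (M : MDP N T k)

theorem xsa_eq_stateFreq_mul (π : Policy N k) (t : ℕ) (s : Fin N) (a : Fin (k s)) :
    xsa M π t s a = stateFreq M π t s * π.q t s a := by
  simp only [xsa, stateFreq, sum_mul]

theorem sum_xsa (π : Policy N k) (t : ℕ) (s : Fin N) :
    ∑ a, xsa M π t s a = stateFreq M π t s := by
  simp only [xsa_eq_stateFreq_mul, ← mul_sum, π.q_sum, mul_one]

theorem stateFreq_zero (π : Policy N k) (s : Fin N) : stateFreq M π 0 s = M.α s := by
  simp [stateFreq, condProb]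

theorem stateFreq_succ (π : Policy N k) (t : ℕ) (j : Fin N) :
    stateFreq M π (t + 1) j = ∑ s, ∑ a, M.p t s a j * xsa M π t s a := by
  simp only [stateFreq, condProb, xsa, mul_sum]
  rw [sum_comm]
  refine sum_congr rfl fun s _ => ?_
  rw [sum_comm]
  exact sum_congr rfl fun a _ => sum_congr rfl fun i _ => by ring

theorem stateFreq_nonneg (π : Policy N k) (t : ℕ) (s : Fin N) : 0 ≤ stateFreq M π t s := by
  induction t generalizing s with
  | zero => exact (stateFreq_zero M π s).symm ▸ (M.α_pos s).le
  | succ t ih =>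
    rw [stateFreq_succ]
    refine sum_nonneg fun s' _ => sum_nonneg fun a _ => mul_nonneg (M.p_nonneg ..) ?_
    rw [xsa_eq_stateFreq_mul]
    exact mul_nonneg (ih s') (π.q_nonneg ..)

theorem stateFreq_congr {π π' : Policy N k} {t : ℕ} (h : ∀ t' < t, π.q t' = π'.q t') :
    stateFreq M π t = stateFreq M π' t := by
  induction t with
  | zero => funext s; simp only [stateFreq_zero]
  | succ t ih =>
    funext j
    simp only [stateFreq_succ, xsa_eq_stateFreq_mul, ih fun t' ht' => h t' (by omega),
      h t (by omega)]

theorem stateFreq_eq_sum_of_q_eq_sum {ι : Type*} [Fintype ι] {π : Policy N k}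
    {ρ : ι → Policy N k} {μ : ι → ℝ} {t₀ : ℕ} (hμ : ∑ i, μ i = 1)
    (hρ : ∀ i t, t ≠ t₀ → (ρ i).q t = π.q t)
    (hq : ∀ s a, π.q t₀ s a = ∑ i, μ i * (ρ i).q t₀ s a) (t : ℕ) (s : Fin N) :
    stateFreq M π t s = ∑ i, μ i * stateFreq M (ρ i) t s := by
  induction t generalizing s with
  | zero => simp only [stateFreq_zero, ← sum_mul, hμ, one_mul]
  | succ t ih =>
    simp only [stateFreq_succ, xsa_eq_stateFreq_mul, mul_sum]
    rw [sum_comm]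
    refine sum_congr rfl fun s' _ => ?_
    rw [sum_comm]
    refine sum_congr rfl fun a _ => ?_
    by_cases ht : t = t₀
    · subst ht
      have hF : ∀ i, stateFreq M (ρ i) t = stateFreq M π t := fun i =>
        stateFreq_congr M fun t' ht' => hρ i t' ht'.ne
      simp only [hF, hq, mul_sum]
      exact sum_congr rfl fun i _ => by ring
    · simp only [hρ _ t ht, ih, sum_mul, mul_sum]
      exact sum_congr rfl fun i _ => by ring

end StateFrequency

section Frequencies

variable {TT}
variable (M : MDP N (TT + 2) k)

theorem xT_eq_stateFreq (π : Policy N k) (s : Fin N) : xT M π s = stateFreq M π (TT + 1) s :=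
  rfl

theorem xvec_congr {π π' : Policy N k} (h : ∀ t ≤ TT, π.q t = π'.q t) :
    xvec M π = xvec M π' := by
  have hF : ∀ t ≤ TT + 1, stateFreq M π t = stateFreq M π' t := fun t ht =>
    stateFreq_congr M fun t' ht' => h t' (by omega)
  refine Prod.ext (funext fun t => funext fun s => funext fun a => ?_) (funext fun s => ?_)
  · simp only [xvec, xsa_eq_stateFreq_mul, hF t (by omega), h t (by omega)]
  · simp only [xvec, xT_eq_stateFreq, hF _ le_rfl]

theorem inP_xvec (π : Policy N k) : inP M (xvec M π) := by
  refine ⟨fun t s a => ?_, fun s => stateFreq_nonneg M π _ s, fun j => ?_, fun t j => ?_,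
    fun j => ?_⟩
  · show 0 ≤ xsa M π t s a
    rw [xsa_eq_stateFreq_mul]
    exact mul_nonneg (stateFreq_nonneg M π _ s) (π.q_nonneg ..)
  · simp only [xvec, Fin.val_zero, sum_xsa, stateFreq_zero]
  · simp only [xvec, Fin.val_succ, Fin.val_castSucc, sum_xsa, stateFreq_succ]
  · simp only [xvec, xT_eq_stateFreq, Fin.val_last, stateFreq_succ]

theorem convex_Pset : Convex ℝ (Pset M) := by
  rintro x ⟨hx0, hxT0, hxα, hxflow, hxT⟩ y ⟨hy0, hyT0, hyα, hyflow, hyT⟩ a b ha hb hab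
  refine ⟨fun t s c => ?_, fun s => ?_, fun j => ?_, fun t j => ?_, fun j => ?_⟩ <;>
    simp only [Prod.fst_add, Prod.snd_add, Prod.smul_fst, Prod.smul_snd, Pi.add_apply,
      Pi.smul_apply, smul_eq_mul, sum_add_distrib, mul_add, mul_left_comm _ a, mul_left_comm _ b,
      ← mul_sum]
  · exact add_nonneg (mul_nonneg ha (hx0 t s c)) (mul_nonneg hb (hy0 t s c))
  · exact add_nonneg (mul_nonneg ha (hxT0 s)) (mul_nonneg hb (hyT0 s))
  · rw [hxα, hyα, ← add_mul, hab, one_mul]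
  · rw [hxflow, hyflow]
  · rw [hxT, hyT]

noncomputable def Policy.ofFreq (π₀ : Policy N k) (x : FreqSpace N k TT)
    (hx : ∀ t s a, 0 ≤ x.1 t s a) : Policy N k where
  q t s a :=
    if ht : t < TT + 1 then
      if ∑ b, x.1 ⟨t, ht⟩ s b = 0 then π₀.q t s a else x.1 ⟨t, ht⟩ s a / ∑ b, x.1 ⟨t, ht⟩ s b
    else π₀.q t s a
  q_nonneg t s a := by
    split_ifs
    exacts [π₀.q_nonneg t s a, div_nonneg (hx ..) (sum_nonneg fun b _ => hx ..),
      π₀.q_nonneg t s a]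
  q_sum t s := by
    split_ifs with ht hx0
    exacts [π₀.q_sum t s, by rw [← sum_div, div_self hx0], π₀.q_sum t s]

theorem sum_mul_ofFreq_q (π₀ : Policy N k) {x : FreqSpace N k TT}
    (hx : ∀ t s a, 0 ≤ x.1 t s a) (t : Fin (TT + 1)) (s : Fin N) (a : Fin (k s)) :
    (∑ b, x.1 t s b) * (Policy.ofFreq π₀ x hx).q t s a = x.1 t s a := by
  simp only [Policy.ofFreq, dif_pos t.isLt, Fin.eta]
  split_ifs with h
  · rw [h, zero_mul, (sum_eq_zero_iff_of_nonneg fun b _ => hx t s b).1 h a (mem_univ a)]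
  · exact mul_div_cancel₀ _ h

theorem stateFreq_ofFreq (π₀ : Policy N k) {x : FreqSpace N k TT} (hx : inP M x)
    (t : Fin (TT + 1)) (s : Fin N) :
    stateFreq M (Policy.ofFreq π₀ x hx.1) t s = ∑ a, x.1 t s a := by
  induction t using Fin.induction generalizing s with
  | zero => rw [Fin.val_zero, stateFreq_zero, hx.2.2.1]
  | succ t ih =>
    rw [Fin.val_succ, stateFreq_succ, hx.2.2.2.1 t s]
    refine sum_congr rfl fun s' _ => sum_congr rfl fun a _ => ?_
    rw [xsa_eq_stateFreq_mul, ← Fin.val_castSucc, ih, sum_mul_ofFreq_q]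

theorem xsa_ofFreq (π₀ : Policy N k) {x : FreqSpace N k TT} (hx : inP M x)
    (t : Fin (TT + 1)) (s : Fin N) (a : Fin (k s)) :
    xsa M (Policy.ofFreq π₀ x hx.1) t s a = x.1 t s a := by
  rw [xsa_eq_stateFreq_mul, stateFreq_ofFreq M π₀ hx, sum_mul_ofFreq_q]

theorem xvec_ofFreq (π₀ : Policy N k) {x : FreqSpace N k TT} (hx : inP M x) :
    xvec M (Policy.ofFreq π₀ x hx.1) = x := by
  refine Prod.ext (funext fun t => funext fun s => funext fun a => xsa_ofFreq M π₀ hx t s a)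
    (funext fun s => ?_)
  show xT M _ s = x.2 s
  rw [xT_eq_stateFreq, stateFreq_succ, hx.2.2.2.2 s]
  refine sum_congr rfl fun s' _ => sum_congr rfl fun a _ => ?_
  rw [← xsa_ofFreq M π₀ hx (Fin.last TT), Fin.val_last]

theorem range_xvec [Nonempty (Policy N k)] : Set.range (xvec M) = Pset M :=
  Set.Subset.antisymm (Set.range_subset_iff.2 (inP_xvec M)) fun _ hx =>
    ⟨_, xvec_ofFreq M (Classical.arbitrary _) hx⟩

theorem xvec_eq_sum_of_q_eq_sum {ι : Type*} [Fintype ι] {π : Policy N k}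
    {ρ : ι → Policy N k} {μ : ι → ℝ} {t₀ : ℕ} (hμ : ∑ i, μ i = 1)
    (hρ : ∀ i t, t ≠ t₀ → (ρ i).q t = π.q t)
    (hq : ∀ s a, π.q t₀ s a = ∑ i, μ i * (ρ i).q t₀ s a) :
    xvec M π = ∑ i, μ i • xvec M (ρ i) := by
  have hF := stateFreq_eq_sum_of_q_eq_sum M hμ hρ hq
  refine Prod.ext (funext fun t => funext fun s => funext fun a => ?_) (funext fun s => ?_)
  · simp only [xvec, Prod.fst_sum, Prod.smul_fst, Finset.sum_apply, Pi.smul_apply, smul_eq_mul,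
      xsa_eq_stateFreq_mul]
    by_cases ht : (t : ℕ) = t₀
    · subst ht
      have hF' : ∀ i, stateFreq M (ρ i) t = stateFreq M π t := fun i =>
        stateFreq_congr M fun t' ht' => hρ i t' ht'.ne
      simp only [hF', hq, mul_sum]
      exact sum_congr rfl fun i _ => by ring
    · simp only [hF, hρ _ _ ht, sum_mul, mul_assoc]
  · simp only [xvec, Prod.snd_sum, Prod.smul_snd, Finset.sum_apply, Pi.smul_apply, smul_eq_mul,
      xT_eq_stateFreq]
    exact hF (TT + 1) s

end Frequencies

section Decomposition

variable {TT}
variable (M : MDP N (TT + 2) k)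

def Policy.setRule (π : Policy N k) (t₀ : ℕ) (f : (s : Fin N) → Fin (k s)) : Policy N k where
  q t s a := if t = t₀ then if a = f s then 1 else 0 else π.q t s a
  q_nonneg t s a := by split_ifs <;> simp [π.q_nonneg]
  q_sum t s := by split_ifs <;> simp [π.q_sum]

theorem xvec_mem_convexHull_setRule (π : Policy N k) (t₀ : ℕ) :
    xvec M π ∈ convexHull ℝ (Set.range fun f => xvec M (π.setRule t₀ f)) := by
  classical
  have hμ : ∑ f : (s : Fin N) → Fin (k s), ∏ s, π.q t₀ s (f s) = 1 :=
    sum_pi_prod_eq_one (π.q_sum t₀)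
  rw [xvec_eq_sum_of_q_eq_sum M (ρ := π.setRule t₀) (t₀ := t₀) hμ
    (fun f t ht => by ext s a; simp [Policy.setRule, ht])
    fun s a => by simp only [Policy.setRule, ↓reduceIte, sum_pi_prod_mul_ite_eq (π.q_sum t₀)]]
  exact (convex_convexHull ℝ _).sum_mem (fun f _ => prod_nonneg fun s _ => π.q_nonneg ..) hμ
    fun f _ => subset_convexHull ℝ _ ⟨f, rfl⟩

def Policy.ofTable (g : Fin (TT + 1) → (s : Fin N) → Fin (k s)) : Policy N k where
  q t s a := if a = g (Fin.clamp t TT) s then 1 else 0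
  q_nonneg t s a := by split_ifs <;> simp
  q_sum t s := by simp

def detFreqs : Set (FreqSpace N k TT) :=
  Set.range fun g : Fin (TT + 1) → (s : Fin N) → Fin (k s) => xvec M (Policy.ofTable g)

theorem detFreqs_finite : (detFreqs M).Finite :=
  Set.finite_range _

theorem xvec_mem_detFreqs {π : Policy N k} (hπ : Deterministic k TT π) :
    xvec M π ∈ detFreqs M := by
  classical
  choose a ha using hπ
  refine ⟨fun t s => a t s t.is_le, xvec_congr M fun t ht => ?_⟩
  ext s b
  have hclamp : Fin.clamp t TT = ⟨t, by omega⟩ := Fin.ext (min_eq_left ht)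
  rw [eq_ite_of_apply_eq_one (π.q_nonneg t s) (π.q_sum t s) (ha t s ht) b]
  simp only [Policy.ofTable, hclamp]

theorem xvec_mem_convexHull_detFreqs (π : Policy N k) :
    xvec M π ∈ convexHull ℝ (detFreqs M) := by
  suffices ∀ m (π : Policy N k), (∀ t s, m ≤ t → t ≤ TT → ∃ a, π.q t s a = 1) →
      xvec M π ∈ convexHull ℝ (detFreqs M) from
    this (TT + 1) π fun t s h₁ h₂ => by omega
  intro m
  induction m with
  | zero => exact fun π hπ =>
      subset_convexHull ℝ _ (xvec_mem_detFreqs M fun t s ht => hπ t s t.zero_le ht)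
  | succ m ih =>
    intro π hπ
    refine convexHull_min ?_ (convex_convexHull ℝ _) (xvec_mem_convexHull_setRule M π m)
    rintro _ ⟨f, rfl⟩
    refine ih _ fun t s hmt htT => ?_
    rcases hmt.eq_or_lt with rfl | hlt
    · exact ⟨f s, by simp [Policy.setRule]⟩
    · obtain ⟨a, ha⟩ := hπ t s hlt htT
      exact ⟨a, by simp [Policy.setRule, hlt.ne', ha]⟩

theorem Pset_eq_convexHull_detFreqs [Nonempty (Policy N k)] :
    Pset M = convexHull ℝ (detFreqs M) := by
  refine Set.Subset.antisymm ?_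
    (convexHull_min (Set.range_subset_iff.2 fun g => inP_xvec M _) (convex_Pset M))
  rw [← range_xvec M]
  rintro _ ⟨π, rfl⟩
  exact xvec_mem_convexHull_detFreqs M π

def lvalLinearMap {kk : ℕ} (R : ℕ → (s : Fin N) → Fin (k s) → Fin kk → ℝ)
    (RT : Fin N → Fin kk → ℝ) : FreqSpace N k TT →ₗ[ℝ] (Fin kk → ℝ) where
  toFun := Lval R RT
  map_add' x y := by
    simp only [Lval, Prod.fst_add, Prod.snd_add, Pi.add_apply, add_smul, sum_add_distrib]
    abel
  map_smul' c x := by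
    simp only [Lval, Prod.smul_fst, Prod.smul_snd, Pi.smul_apply, smul_eq_mul, mul_smul,
      ← smul_sum, RingHom.id_apply, smul_add]

end Decomposition

theorem efficient_iff_positively_scalarized_general (N TT kk : ℕ) (k : Fin N → ℕ)
    (M : MDP N (TT+2) k)
    (R : ℕ → (s : Fin N) → Fin (k s) → Fin kk → ℝ) (RT : Fin N → Fin kk → ℝ)
    (π : Policy N k) :
    (¬ ∃ π' : Policy N k,
        Lval R RT (xvec M π) ≤ Lval R RT (xvec M π') ∧
          Lval R RT (xvec M π') ≠ Lval R RT (xvec M π)) ↔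
      ∃ w : Fin kk → ℝ, (∀ i, 0 < w i) ∧
        ∀ x : FreqSpace N k TT, inP M x →
          ∑ i, w i * Lval R RT x i ≤ ∑ i, w i * Lval R RT (xvec M π) i := by
  classical
  have : Nonempty (Policy N k) := ⟨π⟩
  let s := (detFreqs_finite M).toFinset.image (Lval R RT)
  have hs : convexHull ℝ (s : Set (Fin kk → ℝ)) = Lval R RT '' Pset M := by
    rw [coe_image, Set.Finite.coe_toFinset, Pset_eq_convexHull_detFreqs]
    exact ((lvalLinearMap R RT).image_convexHull _).symm
  constructor
  · intro heff
    obtain ⟨w, hw, hmax⟩ := exists_pos_weights_of_not_dominated s (Lval R RT (xvec M π)) (by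
      rw [hs, ← range_xvec M]
      rintro _ ⟨_, ⟨π', rfl⟩, rfl⟩ hle
      by_contra hne
      exact heff ⟨π', hle, hne⟩)
    exact ⟨w, hw, fun x hx => hmax _ (hs ▸ ⟨x, hx, rfl⟩)⟩
  · rintro ⟨w, hw, hmax⟩ ⟨π', hle, hne⟩
    exact hne (eq_of_le_of_dotProduct_le hw hle (hmax _ (inP_xvec M π')))

/-- a policy `π` is efficient for the vector-valued MDP (no policy `π'`
componentwise dominates it with a different value) iff there exist strictly positive
weights `w` such that `x_π` maximizes the scalarized linear objective `∑_i w_i (Cx)_i`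
over the state-action frequency polytope `P`. -/
theorem efficient_iff_positively_scalarized (N TT kk : ℕ) (k : Fin N → ℕ)
    (hk : ∀ s, 1 ≤ k s) (M : MDP N (TT+2) k)
    (R : ℕ → (s : Fin N) → Fin (k s) → Fin kk → ℝ) (RT : Fin N → Fin kk → ℝ)
    (π : Policy N k) :
    (¬ ∃ π' : Policy N k,
        Lval R RT (xvec M π) ≤ Lval R RT (xvec M π') ∧
          Lval R RT (xvec M π') ≠ Lval R RT (xvec M π)) ↔
      ∃ w : Fin kk → ℝ, (∀ i, 0 < w i) ∧
        ∀ x : FreqSpace N k TT, inP M x →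
          ∑ i, w i * Lval R RT x i ≤ ∑ i, w i * Lval R RT (xvec M π) i :=
  efficient_iff_positively_scalarized_general N TT kk k M R RT π
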